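/- arXiv:1907.10372 — 3 statements merged into one kernel-verified Lean document; each statement's English description precedes it below -/
import Mathlib

section
/- Let n ≥ 1 be a natural number and let u : ℝⁿ → ℝ be a smooth function that is harmonic on all of ℝⁿ, i.e. Δu(x) = 0 for every x ∈ ℝⁿ, where Δ denotes the Euclidean Laplacian (the sum of the second partial derivatives). Suppose there exist constants C > 0 and r < n/2 − 1 such that for every t > 0, ∫_{B_t} (|u(x)|² + ‖∇u(x)‖²) dx ≤ C² t^{2r}, where B_t denotes the open ball of radius t centered at the origin and ∇u is the gradient of u. Then u is identically zero. -/
open MeasureTheory Metric Set Filter Bornology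
open scoped ContDiff

noncomputable section

abbrev Ev (n : ℕ) := EuclideanSpace ℝ (Fin n)

variable {n : ℕ}

lemma one_le_inf : (∞ : WithTop ℕ∞) ≠ 0 := by simp

lemma inf_add_one_le : (∞ : WithTop ℕ∞) + 1 ≤ ∞ := by
  norm_num

def pd (i : Fin n) (v : Ev n → ℝ) : Ev n → ℝ :=
  fun x => fderiv ℝ v x (EuclideanSpace.single i 1)

lemma contDiff_pd {v : Ev n → ℝ} (hv : ContDiff ℝ ∞ v) (i : Fin n) :
    ContDiff ℝ ∞ (pd i v) :=
  (hv.fderiv_right inf_add_one_le).clm_apply contDiff_const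

lemma fderiv_pd {v : Ev n → ℝ} (hv : ContDiff ℝ ∞ v) (i : Fin n) (x ξ : Ev n) :
    fderiv ℝ (pd i v) x ξ = fderiv ℝ (fderiv ℝ v) x ξ (EuclideanSpace.single i 1) := by
  have h : pd i v = fun y => (fderiv ℝ v y) (EuclideanSpace.single i 1) := rfl
  rw [h, fderiv_clm_apply (((hv.fderiv_right inf_add_one_le).differentiable one_le_inf) x)
    (differentiableAt_const _)]
  simp

lemma symm2 {v : Ev n → ℝ} (hv : ContDiff ℝ ∞ v) (x a b : Ev n) :
    fderiv ℝ (fderiv ℝ v) x a b = fderiv ℝ (fderiv ℝ v) x b a :=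
  second_derivative_symmetric (f := v) (fun y => ((hv.differentiable one_le_inf) y).hasFDerivAt)
    (((hv.fderiv_right inf_add_one_le).differentiable one_le_inf x).hasFDerivAt) a b

lemma pd_comm {v : Ev n → ℝ} (hv : ContDiff ℝ ∞ v) (i j : Fin n) :
    pd i (pd j v) = pd j (pd i v) := by
  funext x
  show fderiv ℝ (pd j v) x (EuclideanSpace.single i 1)
      = fderiv ℝ (pd i v) x (EuclideanSpace.single j 1)
  rw [fderiv_pd hv, fderiv_pd hv, symm2 hv]

lemma harmonic_pd {v : Ev n → ℝ} (hv : ContDiff ℝ ∞ v)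
    (hh : ∀ x, ∑ i, pd i (pd i v) x = 0) (j : Fin n) :
    ∀ x, ∑ i, pd i (pd i (pd j v)) x = 0 := by
  intro x
  have h1 : ∀ i : Fin n, pd i (pd i (pd j v)) x = pd j (pd i (pd i v)) x := by
    intro i
    rw [pd_comm hv i j, pd_comm (contDiff_pd hv i) i j]
  rw [Finset.sum_congr rfl fun i _ => h1 i]
  have h2 : ∀ i : Fin n, DifferentiableAt ℝ (pd i (pd i v)) x :=
    fun i => ((contDiff_pd (contDiff_pd hv i) i).differentiable one_le_inf) x
  have h3 : (∑ i, pd j (pd i (pd i v)) x) =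
      fderiv ℝ (fun y => ∑ i, pd i (pd i v) y) x (EuclideanSpace.single j 1) := by
    rw [fderiv_fun_sum fun i _ => h2 i]
    simp [pd]
  rw [h3]
  have h4 : (fun y => ∑ i, pd i (pd i v) y) = fun _ => (0:ℝ) := funext fun y => hh y
  rw [h4, fderiv_fun_const]
  simp

lemma pd_mul {f g : Ev n → ℝ} (i : Fin n) (x : Ev n)
    (hf : DifferentiableAt ℝ f x) (hg : DifferentiableAt ℝ g x) :
    pd i (fun y => f y * g y) x = pd i f x * g x + f x * pd i g x := by
  show fderiv ℝ (fun y => f y * g y) x _ = _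
  rw [fderiv_fun_mul hf hg]
  simp only [ContinuousLinearMap.add_apply, ContinuousLinearMap.smul_apply, smul_eq_mul]
  show f x * fderiv ℝ g x (EuclideanSpace.single i 1)
      + g x * fderiv ℝ f x (EuclideanSpace.single i 1) = _
  show _ = pd i f x * g x + f x * pd i g x
  unfold pd
  ring

lemma cont_integrableOn_ball {f : Ev n → ℝ} (hf : Continuous f) (ρ : ℝ) :
    IntegrableOn f (ball (0 : Ev n) ρ) :=
  ((hf.continuousOn).integrableOn_compact (isCompact_closedBall 0 ρ)).mono_set
    ball_subset_closedBall

lemma eta_facts : ∃ (η : ℝ → Ev n → ℝ) (L : ℝ), 0 ≤ L ∧ ∀ t : ℝ, 0 < t →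
    ContDiff ℝ ∞ (η t) ∧ (∀ x : Ev n, ‖x‖ ≤ t → η t x = 1) ∧ (∀ x, 0 ≤ η t x) ∧
    (∀ x, η t x ≤ 1) ∧
    (∀ x : Ev n, x ∉ closedBall (0:Ev n) ((3/2)*t) → η t x = 0) ∧
    (∀ (i : Fin n) (x : Ev n), |pd i (η t) x| ≤ L / t) ∧
    (∀ (i : Fin n) (x : Ev n), x ∉ ball (0:Ev n) (2*t) → pd i (η t) x = 0) := by
  set φ : ContDiffBump (0 : Ev n) := ⟨1, 3/2, one_pos, by norm_num⟩ with hφ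
  have hφc : ContDiff ℝ ∞ (φ : Ev n → ℝ) := ContDiffBump.contDiff φ (n := (⊤ : ℕ∞))
  have hfc : HasCompactSupport (fderiv ℝ (φ : Ev n → ℝ)) :=
    φ.hasCompactSupport.mono' (support_fderiv_subset ℝ)
  obtain ⟨L, hL⟩ := hfc.exists_bound_of_continuous (hφc.continuous_fderiv one_le_inf)
  refine ⟨fun t x => φ (t⁻¹ • x), L, le_trans (norm_nonneg _) (hL 0), ?_⟩
  intro t ht
  have hts : tsupport (φ : Ev n → ℝ) = closedBall (0:Ev n) (3/2) := φ.tsupport_eq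
  have hsm : ContDiff ℝ ∞ (fun x : Ev n => φ (t⁻¹ • x)) :=
    hφc.comp (contDiff_id.const_smul t⁻¹)
  have hfd : ∀ x : Ev n, HasFDerivAt (fun x : Ev n => φ (t⁻¹ • x))
      ((fderiv ℝ (φ : Ev n → ℝ) (t⁻¹ • x)).comp (t⁻¹ • ContinuousLinearMap.id ℝ (Ev n))) x :=
    fun x => ((hφc.differentiable one_le_inf _).hasFDerivAt).comp x
      ((hasFDerivAt_id x).const_smul t⁻¹)
  have hpd : ∀ (i : Fin n) (x : Ev n), pd i (fun x : Ev n => φ (t⁻¹ • x)) x =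
      t⁻¹ * fderiv ℝ (φ : Ev n → ℝ) (t⁻¹ • x) (EuclideanSpace.single i 1) := by
    intro i x
    show fderiv ℝ _ x (EuclideanSpace.single i 1) = _
    rw [(hfd x).fderiv]
    simp only [ContinuousLinearMap.comp_apply, ContinuousLinearMap.smul_apply,
      ContinuousLinearMap.id_apply]
    rw [(fderiv ℝ (φ : Ev n → ℝ) (t⁻¹ • x)).map_smul]
    simp
  have hnrm : ∀ x : Ev n, ‖t⁻¹ • x‖ = t⁻¹ * ‖x‖ := by
    intro x
    rw [norm_smul, Real.norm_eq_abs, abs_of_pos (by positivity)]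
  refine ⟨hsm, ?_, fun x => φ.nonneg' _, fun x => φ.le_one, ?_, ?_, ?_⟩
  · intro x hx
    apply φ.one_of_mem_closedBall
    rw [mem_closedBall_zero_iff, hnrm]
    calc t⁻¹ * ‖x‖ ≤ t⁻¹ * t := by
          apply mul_le_mul_of_nonneg_left hx (by positivity)
      _ = 1 := inv_mul_cancel₀ ht.ne'
  · intro x hx
    apply image_eq_zero_of_notMem_tsupport
    rw [hts, mem_closedBall_zero_iff, hnrm]
    rw [mem_closedBall_zero_iff] at hx
    push_neg at hx
    rw [not_le]
    calc (3/2 : ℝ) = t⁻¹ * ((3/2) * t) := by field_simp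
      _ < t⁻¹ * ‖x‖ := by exact mul_lt_mul_of_pos_left hx (by positivity)
  · intro i x
    rw [hpd i x, abs_mul, abs_of_pos (show (0:ℝ) < t⁻¹ by positivity)]
    have h1 : |fderiv ℝ (φ : Ev n → ℝ) (t⁻¹ • x) (EuclideanSpace.single i 1)| ≤ L := by
      calc |fderiv ℝ (φ : Ev n → ℝ) (t⁻¹ • x) (EuclideanSpace.single i 1)|
          ≤ ‖fderiv ℝ (φ : Ev n → ℝ) (t⁻¹ • x)‖ * ‖EuclideanSpace.single i (1:ℝ)‖ :=
            (fderiv ℝ (φ : Ev n → ℝ) (t⁻¹ • x)).le_opNorm _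
        _ ≤ L * 1 := by
            apply mul_le_mul (hL _) ?_ (norm_nonneg _) (le_trans (norm_nonneg _) (hL 0))
            rw [EuclideanSpace.norm_single]; simp
        _ = L := mul_one L
    calc t⁻¹ * |fderiv ℝ (φ : Ev n → ℝ) (t⁻¹ • x) (EuclideanSpace.single i 1)| ≤ t⁻¹ * L :=
          mul_le_mul_of_nonneg_left h1 (by positivity)
      _ = L / t := by field_simp
  · intro i x hx
    rw [hpd i x]
    have : fderiv ℝ (φ : Ev n → ℝ) (t⁻¹ • x) = 0 := by
      by_contra h
      have hmem : t⁻¹ • x ∈ tsupport (φ : Ev n → ℝ) :=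
        support_fderiv_subset ℝ (by simpa [Function.mem_support] using h)
      rw [hts, mem_closedBall_zero_iff, hnrm] at hmem
      rw [mem_ball_zero_iff, not_lt] at hx
      have h2 : t⁻¹ * (2 * t) ≤ t⁻¹ * ‖x‖ := mul_le_mul_of_nonneg_left hx (by positivity)
      rw [show t⁻¹ * (2*t) = 2 by field_simp] at h2
      linarith
    simp [this]


lemma cacc : ∃ B : ℝ, 0 ≤ B ∧ ∀ (v : Ev n → ℝ), ContDiff ℝ ∞ v →
    (∀ x, ∑ i, pd i (pd i v) x = 0) → ∀ (i₀ : Fin n) (t : ℝ), 0 < t →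
    ∫ x in ball (0:Ev n) t, (pd i₀ v x)^2 ≤
      (B / t^2) * ∫ x in ball (0:Ev n) (2*t), (v x)^2 := by
  obtain ⟨η, L, hL0, hη⟩ := eta_facts (n := n)
  refine ⟨4*n*L^2, by positivity, ?_⟩
  intro v hv hh i₀ t ht
  obtain ⟨hsm, hone, hnn, hleone, hzero, hpdb, hpdz⟩ := hη t ht
  set e : Ev n → ℝ := η t with he
  set w : Ev n → ℝ := fun x => e x ^ 2 * v x with hwdef
  have hw : ContDiff ℝ ∞ w := (hsm.pow 2).mul hv
  -- compact support helper
  have hcs_of : ∀ (f : Ev n → ℝ), (∀ x, x ∉ closedBall (0:Ev n) (2*t) → f x = 0) →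
      HasCompactSupport f := by
    intro f hf
    exact HasCompactSupport.intro (isCompact_closedBall 0 (2*t)) hf
  have h32t : ∀ x : Ev n, x ∉ closedBall (0:Ev n) (2*t) → x ∉ closedBall (0:Ev n) ((3/2)*t) := by
    intro x hx hmem
    apply hx
    rw [mem_closedBall_zero_iff] at hmem ⊢
    nlinarith
  have hezero : ∀ x : Ev n, x ∉ closedBall (0:Ev n) (2*t) → e x = 0 :=
    fun x hx => hzero x (h32t x hx)
  have hce : HasCompactSupport e := hcs_of e hezero
  have hcw : HasCompactSupport w := hcs_of w (fun x hx => by rw [hwdef]; simp [hezero x hx])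
  have hcpdw : ∀ i, HasCompactSupport (pd i w) := by
    intro i
    apply (hcw.mono' (support_fderiv_subset ℝ)).mono'
    intro x hx
    apply subset_closure
    simp only [Function.mem_support] at hx ⊢
    intro h0
    apply hx
    show fderiv ℝ w x (EuclideanSpace.single i 1) = 0
    rw [h0]
    simp
  -- differentiabilities and continuities
  have hvdiff : Differentiable ℝ v := hv.differentiable one_le_inf
  have hwdiff : Differentiable ℝ w := hw.differentiable one_le_inf
  have hpdvc : ∀ i, Continuous (pd i v) := fun i => (contDiff_pd hv i).continuous
  have hpdwc : ∀ i, Continuous (pd i w) := fun i => (contDiff_pd hw i).continuous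
  have hpd2vc : ∀ i, Continuous (pd i (pd i v)) :=
    fun i => (contDiff_pd (contDiff_pd hv i) i).continuous
  -- the three integrabilities, for each i
  have hint1 : ∀ i, Integrable (fun x => pd i w x * pd i v x) :=
    fun i => ((hpdwc i).mul (hpdvc i)).integrable_of_hasCompactSupport ((hcpdw i).mul_right)
  have hint2 : ∀ i, Integrable (fun x => w x * pd i (pd i v) x) :=
    fun i => ((hw.continuous).mul (hpd2vc i)).integrable_of_hasCompactSupport (hcw.mul_right)
  have hint3 : ∀ i, Integrable (fun x => w x * pd i v x) :=
    fun i => ((hw.continuous).mul (hpdvc i)).integrable_of_hasCompactSupport (hcw.mul_right)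
  -- integration by parts
  have h1 : ∀ i, ∫ x, w x * pd i (pd i v) x = - ∫ x, pd i w x * pd i v x := by
    intro i
    exact integral_mul_fderiv_eq_neg_fderiv_mul_of_integrable
      (hint1 i) (hint2 i) (hint3 i) (fun x _ => hwdiff x) (fun x _ => (contDiff_pd hv i).differentiable one_le_inf x)
  have h2 : ∑ i, ∫ x, w x * pd i (pd i v) x = 0 := by
    rw [← integral_finset_sum _ fun i _ => hint2 i]
    have : ∀ x, (∑ i, w x * pd i (pd i v) x) = 0 := by
      intro x
      rw [← Finset.mul_sum, hh x, mul_zero]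
    simp only [this, integral_zero]
  have hS0 : ∫ x, (∑ i, pd i w x * pd i v x) = 0 := by
    rw [integral_finset_sum _ fun i _ => hint1 i]
    have : ∑ i, ∫ x, pd i w x * pd i v x
        = - ∑ i, ∫ x, w x * pd i (pd i v) x := by
      rw [Finset.sum_congr rfl fun i _ => h1 i, ← Finset.sum_neg_distrib]
      simp
    rw [this, h2, neg_zero]
  -- expand pd of w
  have hpdw : ∀ (i : Fin n) (x : Ev n),
      pd i w x = (2 * e x * pd i e x) * v x + e x^2 * pd i v x := by
    intro i x
    have hww : w = fun y => (fun y => e y * e y) y * v y := by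
      funext y; rw [hwdef]; ring
    have hediff : DifferentiableAt ℝ e x := (hsm.differentiable one_le_inf) x
    rw [hww, pd_mul (f := fun y => e y * e y) i x (hediff.mul hediff) (hvdiff x),
        pd_mul i x hediff hediff]
    have : e x ^ 2 = e x * e x := sq (e x)
    rw [this]
    ring
  -- define P and Q
  set P : Ev n → ℝ := fun x => ∑ i, (1/2) * e x^2 * (pd i v x)^2 with hPdef
  set Q : Ev n → ℝ := fun x => ∑ i, 2 * (v x)^2 * (pd i e x)^2 with hQdef
  have hPc : Continuous P := by
    apply continuous_finset_sum
    intro i _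
    exact (continuous_const.mul ((hsm.continuous).pow 2)).mul ((hpdvc i).pow 2)
  have hQc : Continuous Q := by
    apply continuous_finset_sum
    intro i _
    exact (continuous_const.mul ((hvdiff.continuous).pow 2)).mul
      (((contDiff_pd hsm i).continuous).pow 2)
  have hcP : HasCompactSupport P := by
    apply hcs_of
    intro x hx
    rw [hPdef]
    simp [hezero x hx]
  have hQzero : ∀ x : Ev n, x ∉ ball (0:Ev n) (2*t) → Q x = 0 := by
    intro x hx
    rw [hQdef]
    apply Finset.sum_eq_zero
    intro i _
    rw [hpdz i x hx]
    ring
  have hcQ : HasCompactSupport Q := by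
    apply hcs_of
    intro x hx
    exact hQzero x (fun hm => hx (ball_subset_closedBall hm))
  have hPint : Integrable P := hPc.integrable_of_hasCompactSupport hcP
  have hQint : Integrable Q := hQc.integrable_of_hasCompactSupport hcQ
  have hSint : Integrable (fun x => ∑ i, pd i w x * pd i v x) :=
    integrable_finset_sum _ fun i _ => hint1 i
  -- pointwise bound P - Q ≤ S
  have hPQS : ∀ x, P x - Q x ≤ ∑ i, pd i w x * pd i v x := by
    intro x
    rw [hPdef, hQdef, ← Finset.sum_sub_distrib]
    apply Finset.sum_le_sum
    intro i _
    rw [hpdw i x]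
    nlinarith [sq_nonneg (e x * pd i v x + 2 * v x * pd i e x), sq_nonneg (pd i v x),
      sq_nonneg (v x), sq_nonneg (e x), sq_nonneg (pd i e x)]
  have hPleQ : ∫ x, P x ≤ ∫ x, Q x := by
    have h3 : ∫ x, (P x - Q x) ≤ ∫ x, (∑ i, pd i w x * pd i v x) :=
      integral_mono (hPint.sub hQint) hSint hPQS
    rw [hS0, integral_sub hPint hQint] at h3
    linarith
  -- lower bound for ∫ P
  have hPlow : (1/2) * ∫ x in ball (0:Ev n) t, (pd i₀ v x)^2 ≤ ∫ x, P x := by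
    have ha : ∫ x in ball (0:Ev n) t, (1/2) * (pd i₀ v x)^2 ≤ ∫ x in ball (0:Ev n) t, P x := by
      apply setIntegral_mono_on
      · exact (cont_integrableOn_ball (continuous_const.mul ((hpdvc i₀).pow 2)) t)
      · exact hPint.integrableOn
      · exact measurableSet_ball
      · intro x hx
        rw [mem_ball_zero_iff] at hx
        have hex : e x = 1 := hone x hx.le
        rw [hPdef]
        have : (1/2) * (pd i₀ v x)^2 = (1/2) * e x^2 * (pd i₀ v x)^2 := by
          rw [hex]; ring
        rw [this]
        apply Finset.single_le_sum (f := fun i => (1/2) * e x^2 * (pd i v x)^2)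
          (fun i _ => by positivity) (Finset.mem_univ i₀)
    have hb : ∫ x in ball (0:Ev n) t, P x ≤ ∫ x, P x := by
      apply setIntegral_le_integral hPint
      filter_upwards with x
      rw [hPdef]
      apply Finset.sum_nonneg
      intro i _
      positivity
    rw [integral_const_mul] at ha
    linarith
  -- upper bound for ∫ Q
  have hQhigh : ∫ x, Q x ≤ (2*n*L^2/t^2) * ∫ x in ball (0:Ev n) (2*t), (v x)^2 := by
    have hc : ∫ x, Q x = ∫ x in ball (0:Ev n) (2*t), Q x :=
      (setIntegral_eq_integral_of_forall_compl_eq_zero fun x hx => hQzero x hx).symm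
    have hd : ∫ x in ball (0:Ev n) (2*t), Q x ≤
        ∫ x in ball (0:Ev n) (2*t), (2*n*L^2/t^2) * (v x)^2 := by
      apply setIntegral_mono_on
      · exact hQint.integrableOn
      · exact cont_integrableOn_ball (continuous_const.mul ((hvdiff.continuous).pow 2)) (2*t)
      · exact measurableSet_ball
      · intro x _
        rw [hQdef]
        calc (∑ i, 2 * (v x)^2 * (pd i e x)^2)
            ≤ ∑ _i : Fin n, 2 * (v x)^2 * (L/t)^2 := by
              apply Finset.sum_le_sum
              intro i _
              apply mul_le_mul_of_nonneg_left ?_ (by positivity)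
              rw [← sq_abs (pd i e x)]
              apply pow_le_pow_left₀ (abs_nonneg _) (hpdb i x)
          _ = (2*n*L^2/t^2) * (v x)^2 := by
              rw [Finset.sum_const, Finset.card_univ, Fintype.card_fin]
              field_simp
              have ht2 : t ^ 2 * t⁻¹ ^ 2 = 1 := by rw [← mul_pow, mul_inv_cancel₀ ht.ne', one_pow]
              linear_combination (v x ^ 2 * L ^ 2 * (n:ℝ) * 2) * ht2
    rw [integral_const_mul] at hd
    rw [hc]
    exact hd
  have hij := le_trans hPlow (le_trans hPleQ hQhigh)
  have : (4*(n:ℝ)*L^2) / t^2 = 2 * (2*n*L^2/t^2) := by ring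
  rw [this]
  nlinarith [hij]


lemma pos_near {v : Ev n → ℝ} (hc : Continuous v) {x₀ : Ev n} (hx : v x₀ ≠ 0) :
    ∃ ε > (0:ℝ), ∃ ρ > (0:ℝ), ∀ t : ℝ, ‖x₀‖ + ρ ≤ t →
      ε ≤ ∫ x in ball (0:Ev n) t, (v x)^2 := by
  set c := (v x₀)^2 with hc2
  have hcpos : 0 < c := by positivity
  have hopen : IsOpen {y : Ev n | c/2 < (v y)^2} := isOpen_lt continuous_const (by fun_prop)
  have hx0 : x₀ ∈ {y : Ev n | c/2 < (v y)^2} := by simp only [mem_setOf_eq]; linarith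
  obtain ⟨ρ, hρ, hball⟩ := Metric.isOpen_iff.1 hopen x₀ hx0
  have hvolpos : 0 < (volume (ball x₀ ρ)).toReal :=
    ENNReal.toReal_pos (measure_ball_pos _ _ hρ).ne' measure_ball_lt_top.ne
  refine ⟨c/2 * (volume (ball x₀ ρ)).toReal, by positivity, ρ, hρ, ?_⟩
  intro t htt
  have hsub : ball x₀ ρ ⊆ ball (0:Ev n) t := by
    intro y hy
    rw [mem_ball] at hy
    rw [mem_ball_zero_iff]
    have hyy : x₀ + (y - x₀) = y := by abel
    calc ‖y‖ = ‖x₀ + (y - x₀)‖ := by rw [hyy]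
      _ ≤ ‖x₀‖ + ‖y - x₀‖ := norm_add_le _ _
      _ < ‖x₀‖ + ρ := by
          have : ‖y - x₀‖ < ρ := by rwa [← dist_eq_norm]
          linarith
      _ ≤ t := htt
  have hint : IntegrableOn (fun x => (v x)^2) (ball (0:Ev n) t) :=
    cont_integrableOn_ball (by fun_prop) t
  calc c/2 * (volume (ball x₀ ρ)).toReal
      ≤ ∫ x in ball x₀ ρ, (v x)^2 := by
        rw [mul_comm, ← smul_eq_mul]
        apply setIntegral_ge_of_const_le measurableSet_ball measure_ball_lt_top.ne
        · exact fun y hy => (hball hy).le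
        · exact hint.mono_set hsub
    _ ≤ ∫ x in ball (0:Ev n) t, (v x)^2 := by
        apply setIntegral_mono_set hint
        · filter_upwards with y using by positivity
        · exact HasSubset.Subset.eventuallyLE hsub


lemma const_case (hn : 0 < n) {c A s : ℝ} (hA : 0 ≤ A) (hs : s < (n:ℝ))
    (hb : ∀ t : ℝ, 0 < t → c^2 * (volume (ball (0:Ev n) t)).toReal ≤ A * t ^ s) :
    c = 0 := by
  by_contra hc
  haveI : Nontrivial (Ev n) := by
    refine ⟨EuclideanSpace.single (⟨0, hn⟩ : Fin n) (1:ℝ), 0, fun h => ?_⟩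
    have h1 : ‖EuclideanSpace.single (⟨0, hn⟩ : Fin n) (1:ℝ)‖ = 1 := by
      rw [EuclideanSpace.norm_single]; simp
    rw [h, norm_zero] at h1
    norm_num at h1
  set vol1 := (volume (ball (0:Ev n) 1)).toReal with hv1
  have hvol1 : 0 < vol1 :=
    ENNReal.toReal_pos (measure_ball_pos _ _ one_pos).ne' measure_ball_lt_top.ne
  have hvol : ∀ t : ℝ, 0 < t → (volume (ball (0:Ev n) t)).toReal = t^n * vol1 := by
    intro t ht
    rw [Measure.addHaar_ball volume (0 : Ev n) ht.le, ENNReal.toReal_mul,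
      ENNReal.toReal_ofReal (by positivity), finrank_euclideanSpace_fin]
  set K := c^2 * vol1 with hK
  have hKpos : 0 < K := by positivity
  have hbound : ∀ t : ℝ, 0 < t → K * t ^ ((n:ℝ) - s) ≤ A := by
    intro t ht
    have h1 := hb t ht
    rw [hvol t ht] at h1
    have h2 : (t:ℝ)^(n:ℕ) = t ^ ((n:ℕ):ℝ) := (Real.rpow_natCast t n).symm
    rw [Real.rpow_sub ht]
    rw [mul_div_assoc'] at *
    rw [div_le_iff₀ (Real.rpow_pos_of_pos ht s)]
    calc K * t ^ ((n:ℝ)) = c^2 * (t^(n:ℕ) * vol1) := by rw [← h2]; ring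
      _ ≤ A * t ^ s := h1
  have htop : Tendsto (fun t : ℝ => K * t ^ ((n:ℝ) - s)) atTop atTop :=
    (tendsto_rpow_atTop (by linarith)).const_mul_atTop hKpos
  obtain ⟨t, ht1, ht2⟩ := (htop.eventually_gt_atTop A |>.and (eventually_gt_atTop 0)).exists
  exact absurd (hbound t ht2) (not_le.2 ht1)

lemma fderiv_eq_zero_of_pd {v : Ev n → ℝ} (hpd : ∀ i, ∀ x : Ev n, pd i v x = 0) (x : Ev n) :
    fderiv ℝ v x = 0 := by
  apply ContinuousLinearMap.ext
  intro y
  have hy := (EuclideanSpace.basisFun (Fin n) ℝ).sum_repr y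
  rw [← hy, map_sum]
  rw [ContinuousLinearMap.zero_apply]
  apply Finset.sum_eq_zero
  intro i _
  rw [(fderiv ℝ v x).map_smul, EuclideanSpace.basisFun_apply]
  have := hpd i x
  unfold pd at this
  rw [this]
  simp

lemma liouville_ind (hn : 0 < n) : ∀ k : ℕ, ∀ v : Ev n → ℝ, ContDiff ℝ ∞ v →
    (∀ x, ∑ i, pd i (pd i v) x = 0) → ∀ A s : ℝ, 0 ≤ A → s < (n:ℝ) → s < 2*k →
    (∀ t : ℝ, 0 < t → (∫ x in ball (0:Ev n) t, (v x)^2) ≤ A * t ^ s) → ∀ x, v x = 0 := by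
  intro k
  induction k with
  | zero =>
    intro v hv hh A s hA hsn hsk hb x₀
    by_contra hx
    obtain ⟨ε, hε, ρ, hρ, hlow⟩ := pos_near (hv.continuous) hx
    have h0 : Tendsto (fun t : ℝ => t ^ s) atTop (nhds 0) := by
      have := tendsto_rpow_neg_atTop (y := -s) (by push_cast at hsk; linarith)
      simpa using this
    have htend : Tendsto (fun t : ℝ => A * t ^ s) atTop (nhds 0) := by
      simpa using h0.const_mul A
    have hev : ∀ᶠ t in atTop, A * t ^ s < ε := htend.eventually_lt_const hε
    obtain ⟨t, ht1, ht2⟩ := (hev.and (eventually_ge_atTop (max (‖x₀‖ + ρ) 1))).exists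
    have htpos : (0:ℝ) < t := lt_of_lt_of_le one_pos (le_trans (le_max_right _ _) ht2)
    have h1 : ε ≤ ∫ x in ball (0:Ev n) t, (v x)^2 :=
      hlow t (le_trans (le_max_left _ _) ht2)
    have h2 := hb t htpos
    linarith
  | succ k ih =>
    intro v hv hh A s hA hsn hsk hb x₀
    obtain ⟨B, hB, hcac⟩ := cacc (n := n)
    have hA' : 0 ≤ B * A * (2:ℝ) ^ s := by
      have := Real.rpow_nonneg (le_of_lt two_pos) s
      positivity
    have hpd0 : ∀ (i : Fin n) (x : Ev n), pd i v x = 0 := by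
      intro i
      apply ih (pd i v) (contDiff_pd hv i) (harmonic_pd hv hh i) (B * A * (2:ℝ)^s) (s - 2)
        hA' (by linarith) (by push_cast at hsk ⊢; linarith)
      intro t ht
      calc (∫ x in ball (0:Ev n) t, (pd i v x)^2)
          ≤ (B / t^2) * ∫ x in ball (0:Ev n) (2*t), (v x)^2 := hcac v hv hh i t ht
        _ ≤ (B / t^2) * (A * (2*t) ^ s) := by
            apply mul_le_mul_of_nonneg_left (hb (2*t) (by linarith)) (by positivity)
        _ = B * A * (2:ℝ)^s * t ^ (s - 2) := by
            rw [Real.mul_rpow (le_of_lt two_pos) ht.le, Real.rpow_sub ht]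
            have h2 : t ^ ((2:ℝ)) = t^(2:ℕ) := by
              rw [show ((2:ℝ)) = ((2:ℕ):ℝ) by norm_num, Real.rpow_natCast]
            rw [h2]
            field_simp
    have hfz : ∀ x : Ev n, fderiv ℝ v x = 0 := fderiv_eq_zero_of_pd hpd0
    have hconst : ∀ x : Ev n, v x = v 0 :=
      fun x => is_const_of_fderiv_eq_zero (hv.differentiable one_le_inf) hfz x 0
    have hc0 : v 0 = 0 := by
      apply const_case hn (c := v 0) hA hsn
      intro t ht
      have : (∫ x in ball (0:Ev n) t, (v x)^2) = (v 0)^2 * (volume (ball (0:Ev n) t)).toReal := by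
        rw [show (fun x : Ev n => (v x)^2) = fun _ => (v 0)^2 from funext fun x => by
          rw [hconst x]]
        rw [setIntegral_const, smul_eq_mul, measureReal_def]
        ring
      rw [← this]
      exact hb t ht
    rw [hconst x₀, hc0]


end

theorem stmt_0 (n : ℕ) (hn : 1 ≤ n)
    (u : EuclideanSpace ℝ (Fin n) → ℝ) (hu : ContDiff ℝ (⊤ : ℕ∞) u)
    (hharm : ∀ x : EuclideanSpace ℝ (Fin n),
      ∑ i : Fin n, fderiv ℝ (fun y => fderiv ℝ u y (EuclideanSpace.single i 1)) x
        (EuclideanSpace.single i 1) = 0)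
    (C r : ℝ) (hC : 0 < C) (hr : r < (n : ℝ) / 2 - 1)
    (hbound : ∀ t : ℝ, 0 < t →
      (∫ x in Metric.ball (0 : EuclideanSpace ℝ (Fin n)) t,
        (|u x| ^ 2 + ‖gradient u x‖ ^ 2)) ≤ C ^ 2 * t ^ (2 * r)) :
    u = 0 := by
  have hu' : ContDiff ℝ ∞ u := hu.of_le (by simp)
  have hharm' : ∀ x, ∑ i, pd i (pd i u) x = 0 := fun x => hharm x
  have hgradc : Continuous (gradient u) := by
    have hgr : gradient u = fun x => (InnerProductSpace.toDual ℝ (Ev n)).symm (fderiv ℝ u x) :=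
      rfl
    rw [hgr]
    exact (InnerProductSpace.toDual ℝ (Ev n)).symm.continuous.comp
      (hu'.continuous_fderiv one_le_inf)
  have hb2 : ∀ t : ℝ, 0 < t →
      (∫ x in ball (0:Ev n) t, (u x)^2) ≤ C^2 * t ^ (2*r) := by
    intro t ht
    have h1 : (∫ x in ball (0:Ev n) t, (u x)^2)
        ≤ ∫ x in ball (0:Ev n) t, (|u x| ^ 2 + ‖gradient u x‖ ^ 2) := by
      apply setIntegral_mono_on
      · exact cont_integrableOn_ball ((hu'.continuous).pow 2) t
      · apply cont_integrableOn_ball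
        exact ((hu'.continuous.abs).pow 2).add ((hgradc.norm).pow 2)
      · exact measurableSet_ball
      · intro x _
        rw [sq_abs]
        have : (0:ℝ) ≤ ‖gradient u x‖ ^ 2 := by positivity
        linarith
    exact le_trans h1 (hbound t ht)
  have hn' : 0 < n := hn
  have hzero := liouville_ind hn' n u hu' hharm' (C^2) (2*r) (by positivity)
    (by push_cast; linarith) (by push_cast; linarith) hb2
  funext x
  exact hzero x
end

section
/- Let E be a real normed vector space, let n and α be real numbers, and let L : (0, ∞) → (E →L[ℝ] E) be a family of continuous linear operators on E. Suppose f, g : (0, ∞) → E are differentiable and satisfy f′(t) = g(t) and g′(t) = L(t)(f(t)) − ((n − 1)/t) • g(t) for all t > 0. Define p(τ) = −e^{(n−1−α)τ} • g(e^τ) and q(τ) = e^{(n−2−α)τ} • f(e^τ) for τ ∈ ℝ. Then p and q are differentiable on ℝ and satisfy p′(τ) = −α • p(τ) − e^{2τ} • L(e^τ)(q(τ)) and q′(τ) = −p(τ) + (n − 2 − α) • q(τ) for all τ ∈ ℝ. -/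
theorem stmt_6 (E : Type*) [NormedAddCommGroup E] [NormedSpace ℝ E]
    (n α : ℝ) (L : ℝ → (E →L[ℝ] E)) (f g : ℝ → E)
    (hf : ∀ t : ℝ, 0 < t → HasDerivAt f (g t) t)
    (hg : ∀ t : ℝ, 0 < t →
      HasDerivAt g (L t (f t) - ((n - 1) / t) • g t) t)
    (p q : ℝ → E)
    (hp : p = fun τ => -(Real.exp ((n - 1 - α) * τ) • g (Real.exp τ)))
    (hq : q = fun τ => Real.exp ((n - 2 - α) * τ) • f (Real.exp τ)) :
    ∀ τ : ℝ,
      HasDerivAt p (-(α • p τ) - Real.exp (2 * τ) • L (Real.exp τ) (q τ)) τ ∧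
      HasDerivAt q (-p τ + (n - 2 - α) • q τ) τ := by
  intro τ
  have hepos : (0:ℝ) < Real.exp τ := Real.exp_pos τ
  have hexp : HasDerivAt Real.exp (Real.exp τ) τ := Real.hasDerivAt_exp τ
  have hc : ∀ c : ℝ, HasDerivAt (fun s : ℝ => Real.exp (c * s))
      (c * Real.exp (c * τ)) τ := by
    intro c
    have h1 : HasDerivAt (fun s : ℝ => c * s) c τ := by
      simpa using (hasDerivAt_id τ).const_mul c
    have := (Real.hasDerivAt_exp (c * τ)).comp τ h1
    exact this.congr_deriv (mul_comm _ _)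
  -- derivative of f ∘ exp and g ∘ exp
  have hF : HasDerivAt (fun s => f (Real.exp s)) (Real.exp τ • g (Real.exp τ)) τ :=
    (hf _ hepos).scomp τ hexp
  have hG : HasDerivAt (fun s => g (Real.exp s))
      (Real.exp τ • (L (Real.exp τ) (f (Real.exp τ))
        - ((n - 1) / Real.exp τ) • g (Real.exp τ))) τ :=
    (hg _ hepos).scomp τ hexp
  have hq' : HasDerivAt q
      (Real.exp ((n - 2 - α) * τ) • (Real.exp τ • g (Real.exp τ))
        + ((n - 2 - α) * Real.exp ((n - 2 - α) * τ)) • f (Real.exp τ)) τ := by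
    rw [hq]; exact (hc (n - 2 - α)).smul hF
  have hp' : HasDerivAt p
      (-(Real.exp ((n - 1 - α) * τ) • (Real.exp τ • (L (Real.exp τ) (f (Real.exp τ))
          - ((n - 1) / Real.exp τ) • g (Real.exp τ)))
        + ((n - 1 - α) * Real.exp ((n - 1 - α) * τ)) • g (Real.exp τ))) τ := by
    rw [hp]; exact ((hc (n - 1 - α)).smul hG).neg
  constructor
  · convert hp' using 1
    rw [hp, hq]
    have h1 : Real.exp ((n - 1 - α) * τ) * Real.exp τ = Real.exp ((n - α) * τ) := by
      rw [← Real.exp_add]; ring_nf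
    have h2 : Real.exp (2 * τ) * Real.exp ((n - 2 - α) * τ) = Real.exp ((n - α) * τ) := by
      rw [← Real.exp_add]; ring_nf
    have hne : Real.exp τ ≠ 0 := ne_of_gt hepos
    simp only [map_smul, smul_sub, smul_smul, smul_neg, neg_neg]
    rw [h1, h2]
    have h3 : Real.exp ((n - 1 - α) * τ) * (Real.exp τ * ((n - 1) / Real.exp τ))
        = (n - 1) * Real.exp ((n - 1 - α) * τ) := by
      field_simp
    rw [h3]
    module
  · convert hq' using 1
    rw [hp, hq]
    have h1 : Real.exp ((n - 2 - α) * τ) * Real.exp τ = Real.exp ((n - 1 - α) * τ) := by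
      rw [← Real.exp_add]; ring_nf
    simp only [smul_smul, neg_neg, h1]
end

section
/- Let E be a real Banach space and T₀ ∈ ℝ. Let 𝒜 : ℝ → (E →L[ℝ] E) be continuous with sup_{τ ≤ T₀} ‖𝒜(τ)‖ = M < ∞, and let ℱ : ℝ × E → E be continuous. Suppose Φ^s(τ, ρ) ∈ E →L[ℝ] E is defined and jointly continuous for ρ ≤ τ ≤ T₀, Φ^u(τ, ρ) ∈ E →L[ℝ] E is defined and jointly continuous for τ ≤ ρ ≤ T₀, for each fixed ρ the maps τ ↦ Φ^s(τ, ρ) and τ ↦ Φ^u(τ, ρ) are differentiable with derivative 𝒜(τ) ∘ Φ^{s}(τ, ρ) and 𝒜(τ) ∘ Φ^{u}(τ, ρ) respectively, Φ^s(τ, τ) + Φ^u(τ, τ) = Id for all τ ≤ T₀, and there exist K > 0 and η > 0 with ‖Φ^s(τ, ρ)‖ ≤ K e^{−η(τ − ρ)} for all ρ ≤ τ ≤ T₀. Let h* ∈ E and let h : (−∞, T₀] → E be continuous with sup_{ρ ≤ T₀} ‖ℱ(ρ, h(ρ))‖ < ∞, and suppose that for all τ ≤ T₀, h(τ) = Φ^u(τ,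 T₀) h* + ∫_{−∞}^{τ} Φ^s(τ, ρ) ℱ(ρ, h(ρ)) dρ + ∫_{T₀}^{τ} Φ^u(τ, ρ) ℱ(ρ, h(ρ)) dρ. Then h is differentiable on (−∞, T₀) and h′(τ) = 𝒜(τ)(h(τ)) + ℱ(τ, h(τ)) for all τ < T₀. -/
open MeasureTheory Set Real Topology

theorem stmt_12 (E : Type*) [NormedAddCommGroup E] [NormedSpace ℝ E]
    [CompleteSpace E]
    (T₀ : ℝ) (A : ℝ → (E →L[ℝ] E)) (hAc : Continuous A)
    (M : ℝ) (hAb : ∀ τ ≤ T₀, ‖A τ‖ ≤ M)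
    (F : ℝ × E → E) (hFc : Continuous F)
    (Φs Φu : ℝ → ℝ → (E →L[ℝ] E))
    (hΦsc : ContinuousOn (fun p : ℝ × ℝ => Φs p.1 p.2)
      {p : ℝ × ℝ | p.2 ≤ p.1 ∧ p.1 ≤ T₀})
    (hΦuc : ContinuousOn (fun p : ℝ × ℝ => Φu p.1 p.2)
      {p : ℝ × ℝ | p.1 ≤ p.2 ∧ p.2 ≤ T₀})
    (hΦsd : ∀ ρ τ : ℝ, ρ ≤ τ → τ ≤ T₀ →
      HasDerivAt (fun σ => Φs σ ρ) ((A τ).comp (Φs τ ρ)) τ)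
    (hΦud : ∀ ρ τ : ℝ, τ ≤ ρ → ρ ≤ T₀ →
      HasDerivAt (fun σ => Φu σ ρ) ((A τ).comp (Φu τ ρ)) τ)
    (hid : ∀ τ ≤ T₀, Φs τ τ + Φu τ τ = ContinuousLinearMap.id ℝ E)
    (K η : ℝ) (hK : 0 < K) (hη : 0 < η)
    (hΦsb : ∀ ρ τ : ℝ, ρ ≤ τ → τ ≤ T₀ → ‖Φs τ ρ‖ ≤ K * Real.exp (-η * (τ - ρ)))
    (hstar : E) (h : ℝ → E) (hc : ContinuousOn h (Set.Iic T₀))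
    (bound : ℝ) (hbd : ∀ ρ ≤ T₀, ‖F (ρ, h ρ)‖ ≤ bound)
    (heq : ∀ τ ≤ T₀, h τ = Φu τ T₀ hstar
      + (∫ ρ in Set.Iic τ, Φs τ ρ (F (ρ, h ρ)))
      + ∫ ρ in T₀..τ, Φu τ ρ (F (ρ, h ρ))) :
    ∀ τ < T₀, HasDerivAt h (A τ (h τ) + F (τ, h τ)) τ := by
  have hb0 : 0 ≤ bound := le_trans (norm_nonneg _) (hbd T₀ le_rfl)
  set M' : ℝ := max M 0 with hM'def
  have hM'0 : 0 ≤ M' := le_max_right _ _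
  have hAb' : ∀ σ ≤ T₀, ‖A σ‖ ≤ M' := fun σ hσ => (hAb σ hσ).trans (le_max_left _ _)
  set f : ℝ → E := fun ρ => F (min ρ T₀, h (min ρ T₀)) with hfdef
  have hfc : Continuous f := by
    apply hFc.comp
    exact (continuous_id.min continuous_const).prodMk
      (hc.comp_continuous (continuous_id.min continuous_const) fun x => mem_Iic.2 (min_le_right _ _))
  have hfeq : ∀ ρ ≤ T₀, f ρ = F (ρ, h ρ) := fun ρ hρ => by
    simp only [hfdef, min_eq_left hρ]
  have hfb : ∀ ρ, ‖f ρ‖ ≤ bound := fun ρ => hbd _ (min_le_right _ _)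
  set Gs : ℝ → ℝ → (E →L[ℝ] E) := fun σ ρ => Φs (min σ T₀) (min ρ (min σ T₀)) with hGsdef
  set Gu : ℝ → ℝ → (E →L[ℝ] E) := fun σ ρ => Φu (min σ (min ρ T₀)) (min ρ T₀) with hGudef
  have hGseq : ∀ {σ ρ : ℝ}, ρ ≤ σ → σ ≤ T₀ → Gs σ ρ = Φs σ ρ := by
    intro σ ρ h1 h2
    simp only [hGsdef, min_eq_left h2, min_eq_left h1]
  have hGueq : ∀ {σ ρ : ℝ}, σ ≤ ρ → ρ ≤ T₀ → Gu σ ρ = Φu σ ρ := by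
    intro σ ρ h1 h2
    simp only [hGudef, min_eq_left h2, min_eq_left h1]
  have hGsc : Continuous fun p : ℝ × ℝ => Gs p.1 p.2 := by
    have hm : Continuous fun p : ℝ × ℝ => (min p.1 T₀, min p.2 (min p.1 T₀)) := by fun_prop
    exact hΦsc.comp_continuous hm fun p => mem_setOf_eq ▸ ⟨min_le_right _ _, min_le_right _ _⟩
  have hGuc : Continuous fun p : ℝ × ℝ => Gu p.1 p.2 := by
    have hm : Continuous fun p : ℝ × ℝ => (min p.1 (min p.2 T₀), min p.2 T₀) := by fun_prop
    exact hΦuc.comp_continuous hm fun p => mem_setOf_eq ▸ ⟨min_le_right _ _, min_le_right _ _⟩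
  have hGsb : ∀ {σ ρ : ℝ}, ρ ≤ σ → σ ≤ T₀ → ‖Gs σ ρ‖ ≤ K * Real.exp (-η * (σ - ρ)) := by
    intro σ ρ h1 h2; rw [hGseq h1 h2]; exact hΦsb ρ σ h1 h2
  -- derivatives
  have hGsd : ∀ (v : E) (ρ σ : ℝ), ρ < σ → σ < T₀ →
      HasDerivAt (fun s => Gs s ρ v) (A σ (Gs σ ρ v)) σ := by
    intro v ρ σ h1 h2
    have hd := (hΦsd ρ σ h1.le h2.le).clm_apply (hasDerivAt_const σ v)
    simp only [ContinuousLinearMap.coe_comp', Function.comp_apply, map_zero, add_zero] at hd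
    rw [hGseq h1.le h2.le]
    apply hd.congr_of_eventuallyEq
    filter_upwards [isOpen_Ioo.mem_nhds (show σ ∈ Ioo ρ T₀ from ⟨h1, h2⟩)] with s hs
    rw [hGseq hs.1.le hs.2.le]
  have hGud : ∀ (v : E) (ρ σ : ℝ), σ < ρ → ρ ≤ T₀ →
      HasDerivAt (fun s => Gu s ρ v) (A σ (Gu σ ρ v)) σ := by
    intro v ρ σ h1 h2
    have hd := (hΦud ρ σ h1.le h2).clm_apply (hasDerivAt_const σ v)
    simp only [ContinuousLinearMap.coe_comp', Function.comp_apply, map_zero, add_zero] at hd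
    rw [hGueq h1.le h2]
    apply hd.congr_of_eventuallyEq
    filter_upwards [Iio_mem_nhds h1] with s hs
    rw [hGueq (le_of_lt hs) h2]

  -- continuity of the double integrands
  have hDsc : Continuous (fun p : ℝ × ℝ => A p.2 (Gs p.2 p.1 (f p.1))) := by
    exact (hAc.comp continuous_snd).clm_apply
      (((hGsc.comp (continuous_snd.prodMk continuous_fst)).clm_apply (hfc.comp continuous_fst)))
  have hDuc : Continuous (fun p : ℝ × ℝ => A p.2 (Gu p.2 p.1 (f p.1))) := by
    exact (hAc.comp continuous_snd).clm_apply
      (((hGuc.comp (continuous_snd.prodMk continuous_fst)).clm_apply (hfc.comp continuous_fst)))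
  -- FTC type results
  have F1 : ∀ ρ a : ℝ, ρ ≤ a → a ≤ T₀ →
      ∫ σ in a..T₀, A σ (Gs σ ρ (f ρ)) = Gs T₀ ρ (f ρ) - Gs a ρ (f ρ) := by
    intro ρ a h1 h2
    apply intervalIntegral.integral_eq_sub_of_hasDeriv_right_of_le h2
    · exact (((hGsc.comp (continuous_id.prodMk continuous_const)).clm_apply
        continuous_const)).continuousOn
    · intro x hx
      exact (hGsd (f ρ) ρ x (lt_of_le_of_lt h1 hx.1) hx.2).hasDerivWithinAt
    · exact (hDsc.comp (continuous_const.prodMk continuous_id)).intervalIntegrable _ _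
  have F3 : ∀ (v : E) (ρ a : ℝ), a ≤ ρ → ρ ≤ T₀ →
      ∫ σ in a..ρ, A σ (Gu σ ρ v) = Gu ρ ρ v - Gu a ρ v := by
    intro v ρ a h1 h2
    apply intervalIntegral.integral_eq_sub_of_hasDeriv_right_of_le (f := fun s => Gu s ρ v)
      (f' := fun σ => A σ (Gu σ ρ v)) h1
    · exact (((hGuc.comp (continuous_id.prodMk continuous_const)).clm_apply
        continuous_const)).continuousOn
    · intro x hx
      exact (hGud v ρ x hx.2 h2).hasDerivWithinAt
    · refine Continuous.intervalIntegrable ?_ _ _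
      exact (hAc.clm_apply ((hGuc.comp (continuous_id.prodMk continuous_const)).clm_apply
        continuous_const))
  -- exponential integrability
  have hexp : ∀ c : ℝ, IntegrableOn (fun ρ => Real.exp (η * ρ)) (Iic c) := by
    intro c
    have h1 : Integrable ((Iic (η * c)).indicator Real.exp) :=
      (integrable_indicator_iff measurableSet_Iic).2 (integrableOn_exp_Iic (η * c))
    have h2 := h1.comp_mul_left' hη.ne'
    have h3 : (fun x => (Iic (η * c)).indicator Real.exp (η * x))
        = (Iic c).indicator fun x => Real.exp (η * x) := by
      funext x
      simp only [indicator_apply, mem_Iic, mul_le_mul_iff_right₀ hη]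
    rw [h3] at h2
    exact (integrable_indicator_iff measurableSet_Iic).1 h2
  -- integrability of the stable integrand on half lines
  have L1 : ∀ σ ≤ T₀, IntegrableOn (fun ρ => Gs σ ρ (f ρ)) (Iic σ) := by
    intro σ hσ
    apply Integrable.mono' (g := fun ρ => K * bound * Real.exp (-η * σ) * Real.exp (η * ρ))
      (((hexp σ).const_mul _))
    · exact (((hGsc.comp (continuous_const.prodMk continuous_id)).clm_apply
        hfc)).aestronglyMeasurable
    · filter_upwards [ae_restrict_mem measurableSet_Iic] with ρ hρ
      calc ‖Gs σ ρ (f ρ)‖ ≤ ‖Gs σ ρ‖ * ‖f ρ‖ := ContinuousLinearMap.le_opNorm _ _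
        _ ≤ K * Real.exp (-η * (σ - ρ)) * bound := by
            apply mul_le_mul (hGsb hρ hσ) (hfb ρ) (norm_nonneg _) (by positivity)
        _ = K * bound * Real.exp (-η * σ) * Real.exp (η * ρ) := by
            rw [show -η * (σ - ρ) = -η * σ + η * ρ by ring, Real.exp_add]; ring

  have hAhc : ContinuousOn (fun σ => A σ (h σ)) (Iic T₀) := hAc.continuousOn.clm_apply hc
  have key : ∀ τ ≤ T₀, h τ = h T₀ + ∫ ρ in T₀..τ, (A ρ (h ρ) + f ρ) := by
    intro τ hτ
    set J : Set ℝ := Ioc τ T₀ with hJdef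
    have hJsub : J ⊆ Iic T₀ := Ioc_subset_Iic_self
    set DsI : ℝ × ℝ → E :=
      ({p : ℝ × ℝ | p.1 ≤ p.2}.indicator fun p => A p.2 (Gs p.2 p.1 (f p.1))) with hDsIdef
    set DuI : ℝ × ℝ → E :=
      ({p : ℝ × ℝ | p.2 ≤ p.1}.indicator fun p => A p.2 (Gu p.2 p.1 (f p.1))) with hDuIdef
    -- clamped integral equation
    have heq' : ∀ σ ≤ T₀, h σ = Gu σ T₀ hstar + (∫ ρ in Iic σ, Gs σ ρ (f ρ))
        + ∫ ρ in T₀..σ, Gu σ ρ (f ρ) := by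
      intro σ hσ
      rw [heq σ hσ, hGueq hσ le_rfl]
      congr 1
      · congr 1
        apply setIntegral_congr_fun measurableSet_Iic
        intro ρ hρ
        show Φs σ ρ (F (ρ, h ρ)) = Gs σ ρ (f ρ)
        rw [hGseq (mem_Iic.1 hρ) hσ, hfeq ρ (le_trans (mem_Iic.1 hρ) hσ)]
      · apply intervalIntegral.integral_congr
        intro ρ hρ
        rw [uIcc_of_ge hσ] at hρ
        show Φu σ ρ (F (ρ, h ρ)) = Gu σ ρ (f ρ)
        rw [hGueq hρ.1 hρ.2, hfeq ρ hρ.2]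
    -- integrability facts
    have hLIicT : IntegrableOn (fun ρ => Gs T₀ ρ (f ρ)) (Iic T₀) := L1 T₀ le_rfl
    have hLIicτT : IntegrableOn (fun ρ => Gs T₀ ρ (f ρ)) (Iic τ) :=
      hLIicT.mono_set (Iic_subset_Iic.2 hτ)
    have hLJT : IntegrableOn (fun ρ => Gs T₀ ρ (f ρ)) J := hLIicT.mono_set hJsub
    have hLτ : IntegrableOn (fun ρ => Gs τ ρ (f ρ)) (Iic τ) := L1 τ hτ
    have L2 : Integrable (fun p : ℝ × ℝ => A p.2 (Gs p.2 p.1 (f p.1)))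
        ((volume.restrict (Iic τ)).prod (volume.restrict J)) := by
      apply Integrable.mono'
        (g := fun p => M' * K * bound * (Real.exp (η * p.1) * Real.exp (-η * p.2)))
      · apply Integrable.const_mul
        exact Integrable.mul_prod (hexp τ) ((continuous_exp.comp (by fun_prop)).integrableOn_Ioc)
      · exact hDsc.aestronglyMeasurable
      · rw [Measure.prod_restrict]
        filter_upwards [ae_restrict_mem (measurableSet_Iic.prod measurableSet_Ioc)] with p hp
        obtain ⟨h1, h2⟩ := hp
        have hps : p.1 ≤ p.2 := le_of_lt (lt_of_le_of_lt (mem_Iic.1 h1) h2.1)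
        calc ‖A p.2 (Gs p.2 p.1 (f p.1))‖ ≤ ‖A p.2‖ * ‖Gs p.2 p.1 (f p.1)‖ :=
              ContinuousLinearMap.le_opNorm _ _
          _ ≤ M' * (K * Real.exp (-η * (p.2 - p.1)) * bound) := by
              apply mul_le_mul (hAb' p.2 h2.2) ?_ (norm_nonneg _) hM'0
              calc ‖Gs p.2 p.1 (f p.1)‖ ≤ ‖Gs p.2 p.1‖ * ‖f p.1‖ :=
                    ContinuousLinearMap.le_opNorm _ _
                _ ≤ K * Real.exp (-η * (p.2 - p.1)) * bound :=
                    mul_le_mul (hGsb hps h2.2) (hfb p.1) (norm_nonneg _) (by positivity)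
          _ = M' * K * bound * (Real.exp (η * p.1) * Real.exp (-η * p.2)) := by
              rw [← Real.exp_add, show η * p.1 + -η * p.2 = -η * (p.2 - p.1) by ring]; ring
    have L3 : Integrable DsI ((volume.restrict J).prod (volume.restrict J)) := by
      rw [Measure.prod_restrict]
      apply Integrable.indicator _ (measurableSet_le measurable_fst measurable_snd)
      exact (hDsc.continuousOn.integrableOn_compact
        ((isCompact_Icc (a := τ) (b := T₀)).prod (isCompact_Icc (a := τ) (b := T₀)))).mono_set
        (prod_mono Ioc_subset_Icc_self Ioc_subset_Icc_self)
    have L4 : Integrable DuI ((volume.restrict J).prod (volume.restrict J)) := by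
      rw [Measure.prod_restrict]
      apply Integrable.indicator _ (measurableSet_le measurable_snd measurable_fst)
      exact (hDuc.continuousOn.integrableOn_compact
        ((isCompact_Icc (a := τ) (b := T₀)).prod (isCompact_Icc (a := τ) (b := T₀)))).mono_set
        (prod_mono Ioc_subset_Icc_self Ioc_subset_Icc_self)
    have hI1 : IntegrableOn (fun ρ => Gs ρ ρ (f ρ)) J :=
      ((hGsc.comp (continuous_id.prodMk continuous_id)).clm_apply hfc).integrableOn_Ioc
    have hI4 : IntegrableOn (fun ρ => Gu ρ ρ (f ρ)) J :=
      ((hGuc.comp (continuous_id.prodMk continuous_id)).clm_apply hfc).integrableOn_Ioc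
    have hI2 : IntegrableOn (fun ρ => ∫ σ in J, DsI (ρ, σ)) J := L3.integral_prod_left
    have hI3 : IntegrableOn (fun ρ => ∫ σ in J, DuI (ρ, σ)) J := L4.integral_prod_left
    have hg1 : IntegrableOn (fun σ => A σ (Gu σ T₀ hstar)) J := by
      apply Continuous.integrableOn_Ioc
      exact hAc.clm_apply ((hGuc.comp (continuous_id.prodMk continuous_const)).clm_apply
        continuous_const)
    have hg2 : IntegrableOn (fun σ => ∫ ρ in Iic τ, A σ (Gs σ ρ (f ρ))) J :=
      L2.integral_prod_right
    have hg3 : IntegrableOn (fun σ => ∫ ρ in J, DsI (ρ, σ)) J := L3.integral_prod_right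
    have hg4 : IntegrableOn (fun σ => ∫ ρ in J, DuI (ρ, σ)) J := L4.integral_prod_right
    have hfJ : IntegrableOn f J := hfc.integrableOn_Ioc
    have hAhJ : IntegrableOn (fun σ => A σ (h σ)) J :=
      ((hAhc.mono Icc_subset_Iic_self).integrableOn_compact isCompact_Icc).mono_set
        Ioc_subset_Icc_self
    -- splitting of the Iic T₀ integral
    have hsplit : (∫ ρ in Iic T₀, Gs T₀ ρ (f ρ))
        = (∫ ρ in Iic τ, Gs T₀ ρ (f ρ)) + ∫ ρ in J, Gs T₀ ρ (f ρ) := by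
      rw [← Iic_union_Ioc_eq_Iic hτ,
        setIntegral_union (Iic_disjoint_Ioc le_rfl) measurableSet_Ioc hLIicτT hLJT]
    -- step (ii)
    have Eii : (∫ ρ in Iic τ, Gs T₀ ρ (f ρ)) - (∫ ρ in Iic τ, Gs τ ρ (f ρ))
        = ∫ ρ in Iic τ, ∫ σ in J, A σ (Gs σ ρ (f ρ)) := by
      rw [← integral_sub hLIicτT hLτ]
      apply setIntegral_congr_fun measurableSet_Iic
      intro ρ hρ
      show Gs T₀ ρ (f ρ) - Gs τ ρ (f ρ) = ∫ σ in J, A σ (Gs σ ρ (f ρ))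
      rw [← F1 ρ τ (mem_Iic.1 hρ) hτ, intervalIntegral.integral_of_le hτ]
    -- step (iii)
    have Eiii : (∫ ρ in J, Gs T₀ ρ (f ρ))
        = (∫ ρ in J, Gs ρ ρ (f ρ)) + ∫ ρ in J, ∫ σ in J, DsI (ρ, σ) := by
      rw [← integral_add hI1 hI2]
      apply setIntegral_congr_fun measurableSet_Ioc
      intro ρ hρ
      show Gs T₀ ρ (f ρ) = Gs ρ ρ (f ρ) + ∫ σ in J, DsI (ρ, σ)
      have e1 : (∫ σ in J, DsI (ρ, σ)) = ∫ σ in ρ..T₀, A σ (Gs σ ρ (f ρ)) := by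
        rw [show (fun σ => DsI (ρ, σ)) = (Ici ρ).indicator (fun σ => A σ (Gs σ ρ (f ρ))) from
          funext fun σ => by simp [hDsIdef, Set.indicator_apply, mem_Ici, mem_setOf_eq],
          setIntegral_indicator measurableSet_Ici,
          show J ∩ Ici ρ = Icc ρ T₀ from ?_, integral_Icc_eq_integral_Ioc,
          ← intervalIntegral.integral_of_le hρ.2]
        ext x
        simp only [hJdef, mem_inter_iff, mem_Ioc, mem_Ici, mem_Icc]
        constructor
        · rintro ⟨⟨_, h2⟩, h3⟩; exact ⟨h3, h2⟩
        · rintro ⟨h1, h2⟩; exact ⟨⟨lt_of_lt_of_le hρ.1 h1, h2⟩, h1⟩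
      rw [e1, F1 ρ ρ le_rfl hρ.2]
      abel
    -- step (w)
    have Ew : (∫ ρ in T₀..τ, Gu τ ρ (f ρ))
        = (∫ ρ in J, ∫ σ in J, DuI (ρ, σ)) - ∫ ρ in J, Gu ρ ρ (f ρ) := by
      rw [intervalIntegral.integral_symm, intervalIntegral.integral_of_le hτ, ← hJdef]
      have hpt : ∀ ρ ∈ J, Gu τ ρ (f ρ) = Gu ρ ρ (f ρ) - ∫ σ in J, DuI (ρ, σ) := by
        intro ρ hρ
        show Gu τ ρ (f ρ) = Gu ρ ρ (f ρ) - ∫ σ in J, DuI (ρ, σ)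
        have e2 : (∫ σ in J, DuI (ρ, σ)) = ∫ σ in τ..ρ, A σ (Gu σ ρ (f ρ)) := by
          rw [show (fun σ => DuI (ρ, σ)) = (Iic ρ).indicator (fun σ => A σ (Gu σ ρ (f ρ))) from
            funext fun σ => by simp [hDuIdef, Set.indicator_apply, mem_Iic, mem_setOf_eq],
            setIntegral_indicator measurableSet_Iic, hJdef, Ioc_inter_Iic, min_eq_right hρ.2,
            ← intervalIntegral.integral_of_le hρ.1.le]
        rw [e2, F3 (f ρ) ρ τ hρ.1.le hρ.2]
        abel
      rw [setIntegral_congr_fun measurableSet_Ioc hpt, integral_sub hI4 hI3, neg_sub]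
    -- step (p)
    have Ep : Gu T₀ T₀ hstar - Gu τ T₀ hstar = ∫ σ in J, A σ (Gu σ T₀ hstar) := by
      rw [← F3 hstar T₀ τ hτ le_rfl, intervalIntegral.integral_of_le hτ]
    -- Fubini swaps
    have Sw1 : (∫ ρ in Iic τ, ∫ σ in J, A σ (Gs σ ρ (f ρ)))
        = ∫ σ in J, ∫ ρ in Iic τ, A σ (Gs σ ρ (f ρ)) := integral_integral_swap L2
    have Sw2 : (∫ ρ in J, ∫ σ in J, DsI (ρ, σ)) = ∫ σ in J, ∫ ρ in J, DsI (ρ, σ) :=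
      integral_integral_swap L3
    have Sw3 : (∫ ρ in J, ∫ σ in J, DuI (ρ, σ)) = ∫ σ in J, ∫ ρ in J, DuI (ρ, σ) :=
      integral_integral_swap L4
    -- identification of the A-terms
    have Eg : (∫ σ in J, A σ (Gu σ T₀ hstar)) + (∫ σ in J, ∫ ρ in Iic τ, A σ (Gs σ ρ (f ρ)))
        + (∫ σ in J, ∫ ρ in J, DsI (ρ, σ)) - (∫ σ in J, ∫ ρ in J, DuI (ρ, σ))
        = ∫ σ in J, A σ (h σ) := by
      have haux12 : IntegrableOn (fun σ => A σ (Gu σ T₀ hstar)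
          + ∫ ρ in Iic τ, A σ (Gs σ ρ (f ρ))) J := hg1.add hg2
      have haux123 : IntegrableOn (fun σ => A σ (Gu σ T₀ hstar)
          + (∫ ρ in Iic τ, A σ (Gs σ ρ (f ρ))) + ∫ ρ in J, DsI (ρ, σ)) J := haux12.add hg3
      have e3 := integral_add hg1 hg2
      have e2 := integral_add haux12 hg3
      have e1 := integral_sub haux123 hg4
      rw [← e3, ← e2, ← e1]
      apply setIntegral_congr_fun measurableSet_Ioc
      intro σ hσ
      show A σ (Gu σ T₀ hstar) + (∫ ρ in Iic τ, A σ (Gs σ ρ (f ρ)))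
        + (∫ ρ in J, DsI (ρ, σ)) - (∫ ρ in J, DuI (ρ, σ)) = A σ (h σ)
      have hIa : IntegrableOn (fun ρ => A σ (Gs σ ρ (f ρ))) (Iic σ) :=
        (A σ).integrable_comp (L1 σ hσ.2)
      have hv : (∫ ρ in Iic τ, A σ (Gs σ ρ (f ρ))) + (∫ ρ in J, DsI (ρ, σ))
          = A σ (∫ ρ in Iic σ, Gs σ ρ (f ρ)) := by
        have e3 : (∫ ρ in J, DsI (ρ, σ)) = ∫ ρ in Ioc τ σ, A σ (Gs σ ρ (f ρ)) := by
          rw [show (fun ρ => DsI (ρ, σ)) = (Iic σ).indicator (fun ρ => A σ (Gs σ ρ (f ρ))) from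
            funext fun ρ => by simp [hDsIdef, Set.indicator_apply, mem_Iic, mem_setOf_eq],
            setIntegral_indicator measurableSet_Iic, hJdef, Ioc_inter_Iic, min_eq_right hσ.2]
        rw [e3, ← setIntegral_union (Iic_disjoint_Ioc le_rfl) measurableSet_Ioc
          (hIa.mono_set (Iic_subset_Iic.2 hσ.1.le)) (hIa.mono_set Ioc_subset_Iic_self),
          Iic_union_Ioc_eq_Iic hσ.1.le, ← ContinuousLinearMap.integral_comp_comm _ (L1 σ hσ.2)]
      have hGuint : IntegrableOn (fun ρ => Gu σ ρ (f ρ)) (Ioc σ T₀) :=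
        ((hGuc.comp (continuous_const.prodMk continuous_id)).clm_apply hfc).integrableOn_Ioc
      have hw : (∫ ρ in J, DuI (ρ, σ)) = A σ (∫ ρ in Ioc σ T₀, Gu σ ρ (f ρ)) := by
        rw [show (fun ρ => DuI (ρ, σ)) = (Ici σ).indicator (fun ρ => A σ (Gu σ ρ (f ρ))) from
          funext fun ρ => by simp [hDuIdef, Set.indicator_apply, mem_Ici, mem_setOf_eq],
          setIntegral_indicator measurableSet_Ici,
          show J ∩ Ici σ = Icc σ T₀ from ?_, integral_Icc_eq_integral_Ioc,
          ← ContinuousLinearMap.integral_comp_comm _ hGuint]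
        ext x
        simp only [hJdef, mem_inter_iff, mem_Ioc, mem_Ici, mem_Icc]
        constructor
        · rintro ⟨⟨_, h2⟩, h3⟩; exact ⟨h3, h2⟩
        · rintro ⟨h1, h2⟩; exact ⟨⟨lt_of_lt_of_le hσ.1 h1, h2⟩, h1⟩
      rw [add_assoc, hv, hw, heq' σ hσ.2, map_add, map_add,
        show (∫ ρ in T₀..σ, Gu σ ρ (f ρ)) = -∫ ρ in Ioc σ T₀, Gu σ ρ (f ρ) by
          rw [intervalIntegral.integral_symm, intervalIntegral.integral_of_le hσ.2],
        map_neg]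
      abel
    -- the identity part
    have Ef : (∫ ρ in J, Gs ρ ρ (f ρ)) + (∫ ρ in J, Gu ρ ρ (f ρ)) = ∫ ρ in J, f ρ := by
      rw [← integral_add hI1 hI4]
      apply setIntegral_congr_fun measurableSet_Ioc
      intro ρ hρ
      show Gs ρ ρ (f ρ) + Gu ρ ρ (f ρ) = f ρ
      rw [hGseq le_rfl hρ.2, hGueq le_rfl hρ.2, ← ContinuousLinearMap.add_apply, hid ρ hρ.2]
      simp
    -- main computation
    have main : h T₀ - h τ = ∫ ρ in J, (A ρ (h ρ) + f ρ) := by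
      calc h T₀ - h τ
          = (Gu T₀ T₀ hstar - Gu τ T₀ hstar)
            + (((∫ ρ in Iic τ, Gs T₀ ρ (f ρ)) - (∫ ρ in Iic τ, Gs τ ρ (f ρ)))
              + (∫ ρ in J, Gs T₀ ρ (f ρ)))
            - (∫ ρ in T₀..τ, Gu τ ρ (f ρ)) := by
            rw [heq' T₀ le_rfl, heq' τ hτ, intervalIntegral.integral_same, hsplit]; abel
        _ = (∫ σ in J, A σ (Gu σ T₀ hstar))
            + ((∫ ρ in Iic τ, ∫ σ in J, A σ (Gs σ ρ (f ρ)))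
              + ((∫ ρ in J, Gs ρ ρ (f ρ)) + ∫ ρ in J, ∫ σ in J, DsI (ρ, σ)))
            - ((∫ ρ in J, ∫ σ in J, DuI (ρ, σ)) - ∫ ρ in J, Gu ρ ρ (f ρ)) := by
            rw [Ep, Eii, Eiii, Ew]
        _ = ((∫ ρ in J, Gs ρ ρ (f ρ)) + (∫ ρ in J, Gu ρ ρ (f ρ)))
            + ((∫ σ in J, A σ (Gu σ T₀ hstar))
              + (∫ σ in J, ∫ ρ in Iic τ, A σ (Gs σ ρ (f ρ)))
              + (∫ σ in J, ∫ ρ in J, DsI (ρ, σ)) - (∫ σ in J, ∫ ρ in J, DuI (ρ, σ))) := by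
            rw [Sw1, Sw2, Sw3]; abel
        _ = (∫ ρ in J, f ρ) + (∫ σ in J, A σ (h σ)) := by rw [Ef, Eg]
        _ = ∫ ρ in J, (A ρ (h ρ) + f ρ) := by
            rw [integral_add hAhJ hfJ]; exact add_comm _ _
    rw [intervalIntegral.integral_symm, intervalIntegral.integral_of_le hτ, ← hJdef, ← main]
    abel
  intro τ hτ
  have hmem : Iic T₀ ∈ 𝓝 τ := Iic_mem_nhds hτ
  have hGIic : ContinuousOn (fun ρ => A ρ (h ρ) + f ρ) (Iic T₀) :=
    hAhc.add hfc.continuousOn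
  have hderiv : HasDerivAt (fun u => h T₀ + ∫ ρ in T₀..u, (A ρ (h ρ) + f ρ))
      (A τ (h τ) + f τ) τ := by
    apply HasDerivAt.const_add
    apply intervalIntegral.integral_hasDerivAt_right
    · apply ContinuousOn.intervalIntegrable
      apply hGIic.mono
      rw [uIcc_of_ge (le_of_lt hτ)]
      exact Icc_subset_Iic_self
    · exact ContinuousOn.stronglyMeasurableAtFilter isOpen_Iio
        (hGIic.mono Iio_subset_Iic_self) τ hτ
    · exact hGIic.continuousAt hmem
  have hd : HasDerivAt h (A τ (h τ) + f τ) τ := by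
    apply hderiv.congr_of_eventuallyEq
    filter_upwards [hmem] with σ hσ
    exact key σ hσ
  rw [hfeq τ (le_of_lt hτ)] at hd
  exact hd
end
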